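/- Assume (A1) and (A3). Then for each t ∈ {0,1}, the mean potential outcome is identified using randomized-trial outcome data only: μ_t = E[ R·1{T=t}·Y / (λ₁(X)·π_{t1}) ] and μ_t = E[ τ_t(1,X) ]; moreover τ_t(1,X) = E[Y | T=t, R=1, X] almost surely. -/

import Mathlib

open MeasureTheory ProbabilityTheory Set

noncomputable section

/-- The σ-algebra on `Ω` generated by the map `X`. -/
def sigmaX {Ω 𝒳 : Type*} [MeasurableSpace 𝒳] (X : Ω → 𝒳) : MeasurableSpace Ω :=
  MeasurableSpace.comap X inferInstance

/-- Conditional expectation of `f` given the σ-algebra `m'` under the measure `μ`. -/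
def cexp {Ω : Type*} (m' : MeasurableSpace Ω) {m0 : MeasurableSpace Ω} (μ : Measure Ω)
    (f : Ω → ℝ) : Ω → ℝ :=
  MeasureTheory.condExp m' μ f

/-- Conditional probability of the event `s` given the σ-algebra `m'`, as a function. -/
def cprob {Ω : Type*} (m' : MeasurableSpace Ω) {m0 : MeasurableSpace Ω} (μ : Measure Ω)
    (s : Set Ω) : Ω → ℝ :=
  cexp m' μ (s.indicator fun _ => (1 : ℝ))

/-- `f` and `g` are conditionally independent given the σ-algebra `m'` under `μ` :
conditional probabilities of joint events factorize. -/
def CondIndepFunGiven {Ω β γ : Type*} [MeasurableSpace β]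
    [MeasurableSpace γ] (m' : MeasurableSpace Ω) {m0 : MeasurableSpace Ω}
    (f : Ω → β) (g : Ω → γ) (μ : Measure Ω) : Prop :=
  ∀ s u, MeasurableSet s → MeasurableSet u →
    cprob m' μ (f ⁻¹' s ∩ g ⁻¹' u)
      =ᵐ[μ] fun ω => cprob m' μ (f ⁻¹' s) ω * cprob m' μ (g ⁻¹' u) ω

/-!
Write `S = {R = 1}`, `λ₁(X) = P(S | X)` and `π = P(T = t | S)`. Conditional independence (A3)
makes the measures `u ↦ E[1_A 1_S 1{V ∈ u}]` and `u ↦ E[1_A λ₁(X) 1{V ∈ u}]` agree for every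
`σ(X)`-event `A`, where `V = (Y₁, Y₀)`; hence `E[1_S g(V) | X] = λ₁(X) E[g(V) | X]`. A Bayes formula
for conditional expectations under `P(· | S)` turns this into `E[Y_t | X, S] = E[Y_t | X]`, first
`P(· | S)`-almost surely and then, because `λ₁(X) ≥ ε`, `P`-almost surely; integrating gives
`μ_t = E[τ_t(1, X)]`. By (A1), `{T = t}` is independent of `(Y₁, Y₀, X)` under `P(· | S)`, so
conditioning further on `T = t` changes nothing (the third claim), and the same Bayes formula read
backwards gives `E[1_S 1{T = t} Y_t | X] = π λ₁(X) E[Y_t | X]`; dividing by `π λ₁(X)` inside the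
expectation yields the weighting formula.
-/

section General

variable {Ω : Type*} {m mΩ : MeasurableSpace Ω} {μ : Measure Ω}

lemma setIntegral_cond_eq {S A : Set Ω} (hS : MeasurableSet S) (hA : MeasurableSet A)
    (u : Ω → ℝ) :
    ∫ ω in A, u ω ∂μ[|S] = (μ.real S)⁻¹ * ∫ ω in A, S.indicator u ω ∂μ := by
  rw [ProbabilityTheory.cond, Measure.restrict_smul, integral_smul_measure,
    Measure.restrict_restrict hA, setIntegral_indicator hS, ENNReal.toReal_inv, smul_eq_mul,
    Measure.real]

lemma cprob_nonneg (s : Set Ω) : 0 ≤ᵐ[μ] cprob m μ s :=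
  condExp_nonneg (Filter.Eventually.of_forall (indicator_nonneg fun _ _ => zero_le_one))

lemma abs_cprob_le_one (s : Set Ω) : ∀ᵐ ω ∂μ, |cprob m μ s ω| ≤ 1 :=
  ae_bdd_abs_condExp_of_ae_bdd_abs (Filter.Eventually.of_forall fun ω => by
    by_cases h : ω ∈ s <;> simp [h])

lemma stronglyMeasurable_cprob (s : Set Ω) : StronglyMeasurable[m] (cprob m μ s) :=
  stronglyMeasurable_condExp

lemma setIntegral_cprob (hm : m ≤ mΩ) [IsFiniteMeasure μ] {s A : Set Ω} (hs : MeasurableSet s)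
    (hA : MeasurableSet[m] A) : ∫ ω in A, cprob m μ s ω ∂μ = μ.real (A ∩ s) := by
  rw [cprob, cexp, setIntegral_condExp hm ((integrable_const 1).indicator hs) hA,
    setIntegral_indicator hs, setIntegral_const, smul_eq_mul, mul_one]

lemma ae_eq_of_ae_eq_cond (hm : m ≤ mΩ) [IsFiniteMeasure μ] {S : Set Ω} (hS : MeasurableSet S)
    (hpos : ∀ᵐ ω ∂μ, 0 < cprob m μ S ω) {f g : Ω → ℝ}
    (hf : StronglyMeasurable[m] f) (hg : StronglyMeasurable[m] g) (hfg : f =ᵐ[μ[|S]] g) :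
    f =ᵐ[μ] g := by
  set D := {ω | f ω = g ω}ᶜ
  have hD : MeasurableSet[m] D := (hf.measurableSet_eq_fun hg).compl
  have hDS : μ (D ∩ S) = 0 := by
    rw [Filter.EventuallyEq, ae_iff, cond_apply hS, inter_comm] at hfg
    exact (mul_eq_zero.mp hfg).resolve_left (ENNReal.inv_ne_zero.mpr (measure_ne_top μ S))
  have hzero := (setIntegral_eq_zero_iff_of_nonneg_ae
    (ae_restrict_of_ae (cprob_nonneg (m := m) (μ := μ) S)) integrable_condExp.integrableOn).mp
    (by rw [setIntegral_cprob hm hS hD, Measure.real, hDS, ENNReal.toReal_zero])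
  have : ∀ᵐ ω ∂μ.restrict D, False := by
    filter_upwards [hzero, ae_restrict_of_ae hpos] with ω h0 hp
    exact hp.ne' h0
  rw [Filter.EventuallyEq, ae_iff]
  exact Measure.restrict_eq_zero.mp (ae_eq_bot.mp (Filter.eventually_false_iff_eq_bot.mp this))

lemma setIntegral_mul_condExp (hm : m ≤ mΩ) [IsFiniteMeasure μ] {w u : Ω → ℝ}
    (hw : StronglyMeasurable[m] w) (hwu : Integrable (w * u) μ) (hu : Integrable u μ)
    {A : Set Ω} (hA : MeasurableSet[m] A) :
    ∫ ω in A, w ω * μ[u | m] ω ∂μ = ∫ ω in A, w ω * u ω ∂μ :=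
  (setIntegral_congr_ae (hm A hA)
    ((condExp_mul_of_stronglyMeasurable_left hw hwu hu).mono fun _ h _ => h.symm)).trans
    (setIntegral_condExp hm hwu hA)

end General

section CondIndep

variable {Ω β γ : Type*} {m mΩ : MeasurableSpace Ω} [MeasurableSpace β] [MeasurableSpace γ]
  {μ : Measure Ω} {R : Ω → β} {V : Ω → γ}

lemma integrable_cprob_mul [IsFiniteMeasure μ] (hm : m ≤ mΩ) (s : Set Ω) {g : Ω → ℝ}
    (hg : Integrable g μ) : Integrable (cprob m μ s * g) μ :=
  hg.bdd_mul ((stronglyMeasurable_cprob s).mono hm).aestronglyMeasurable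
    ((abs_cprob_le_one s).mono fun _ h => by rwa [Real.norm_eq_abs])

lemma CondIndepFunGiven.setIntegral_indicator_comp (hm : m ≤ mΩ) [IsFiniteMeasure μ]
    (hR : Measurable R) (hV : Measurable V) (h : CondIndepFunGiven m R V μ) {s : Set β}
    (hs : MeasurableSet s) {φ : γ → ℝ} (hφ : Measurable φ) {A : Set Ω} (hA : MeasurableSet[m] A) :
    ∫ ω in A, (R ⁻¹' s).indicator (φ ∘ V) ω ∂μ = ∫ ω in A, cprob m μ (R ⁻¹' s) ω * φ (V ω) ∂μ := by
  set S := R ⁻¹' s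
  set L := cprob m μ S
  have hS : MeasurableSet S := hR hs
  have hL : Measurable L := ((stronglyMeasurable_cprob S).mono hm).measurable
  set ν := (μ.restrict A).withDensity fun ω => ENNReal.ofReal (L ω)
  have hν : ∀ g : Ω → ℝ, ∫ ω, g ω ∂ν = ∫ ω in A, L ω * g ω ∂μ := fun g => by
    rw [integral_withDensity_eq_integral_toReal_smul hL.ennreal_ofReal
      (ae_of_all _ fun _ => ENNReal.ofReal_lt_top)]
    refine integral_congr_ae ?_
    filter_upwards [ae_restrict_of_ae (cprob_nonneg (m := m) (μ := μ) S)] with ω h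
    simp only [smul_eq_mul, ENNReal.toReal_ofReal (r := L ω) h]
  have : IsFiniteMeasure ν :=
    isFiniteMeasure_withDensity_ofReal integrable_condExp.integrableOn.hasFiniteIntegral
  have hmap : (μ.restrict (A ∩ S)).map V = ν.map V := by
    ext u hu
    rw [Measure.map_apply hV hu, Measure.map_apply hV hu]
    refine (ENNReal.toReal_eq_toReal_iff' (measure_ne_top _ _) (measure_ne_top _ _)).mp ?_
    change (μ.restrict (A ∩ S)).real (V ⁻¹' u) = ν.real (V ⁻¹' u)
    have hVu : MeasurableSet (V ⁻¹' u) := hV hu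
    rw [← integral_indicator_one hVu, ← integral_indicator_one hVu, Pi.one_def, hν,
      ← setIntegral_indicator hS, indicator_indicator, ← setIntegral_condExp hm
        ((integrable_const 1).indicator (hS.inter hVu)) hA,
      ← setIntegral_mul_condExp hm (stronglyMeasurable_cprob S)
        (integrable_cprob_mul hm S ((integrable_const 1).indicator hVu))
        ((integrable_const 1).indicator hVu) hA]
    exact setIntegral_congr_ae (hm A hA) ((h s u hs hu).mono fun _ h _ => h)
  calc ∫ ω in A, S.indicator (φ ∘ V) ω ∂μ = ∫ ω, φ (V ω) ∂μ.restrict (A ∩ S) :=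
        setIntegral_indicator hS
    _ = ∫ ω, φ (V ω) ∂ν := by
        rw [← integral_map hV.aemeasurable hφ.aestronglyMeasurable, hmap,
          integral_map hV.aemeasurable hφ.aestronglyMeasurable]
    _ = ∫ ω in A, L ω * φ (V ω) ∂μ := hν _

lemma CondIndepFunGiven.condExp_indicator_comp (hm : m ≤ mΩ) [IsFiniteMeasure μ]
    (hR : Measurable R) (hV : Measurable V) (h : CondIndepFunGiven m R V μ) {s : Set β}
    (hs : MeasurableSet s) {φ : γ → ℝ} (hφ : Measurable φ) (hint : Integrable (φ ∘ V) μ) :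
    μ[(R ⁻¹' s).indicator (φ ∘ V) | m] =ᵐ[μ] cprob m μ (R ⁻¹' s) * μ[φ ∘ V | m] := by
  refine (ae_eq_condExp_of_forall_setIntegral_eq hm (hint.indicator (hR hs))
    (fun _ _ _ => (integrable_cprob_mul hm _ integrable_condExp).integrableOn)
    (fun A hA _ => ?_)
    ((stronglyMeasurable_cprob _).mul stronglyMeasurable_condExp).aestronglyMeasurable).symm
  rw [h.setIntegral_indicator_comp hm hR hV hs hφ hA]
  exact setIntegral_mul_condExp hm (stronglyMeasurable_cprob _)
    (integrable_cprob_mul hm _ hint) hint hA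

end CondIndep

lemma MeasureTheory.Integrable.cond {Ω : Type*} {mΩ : MeasurableSpace Ω} {μ : Measure Ω}
    {g : Ω → ℝ} (hg : Integrable g μ) (S : Set Ω) : Integrable g μ[|S] := by
  by_cases hS : μ S = 0
  · simp [cond_eq_zero_of_meas_eq_zero hS]
  · exact hg.integrableOn.smul_measure (ENNReal.inv_ne_top.mpr hS)

section Bayes

variable {Ω : Type*} {m mΩ : MeasurableSpace Ω} {μ : Measure Ω} [IsFiniteMeasure μ]
  {S : Set Ω} {g h : Ω → ℝ}

lemma setIntegral_cond_eq_setIntegral_cprob_mul (hm : m ≤ mΩ) (hS : MeasurableSet S)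
    (hh : StronglyMeasurable[m] h) (hhi : Integrable h μ) {A : Set Ω} (hA : MeasurableSet[m] A) :
    ∫ ω in A, h ω ∂μ[|S] = (μ.real S)⁻¹ * ∫ ω in A, cprob m μ S ω * h ω ∂μ := by
  have hind : S.indicator h = h * S.indicator fun _ => 1 := by
    ext ω; by_cases hω : ω ∈ S <;> simp [hω]
  have hmul := setIntegral_mul_condExp hm hh (hind ▸ hhi.indicator hS)
    ((integrable_const 1).indicator hS) hA
  rw [setIntegral_cond_eq hS (hm A hA), hind]
  simp_rw [mul_comm (cprob m μ S _)]
  exact congrArg _ hmul.symm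

lemma ae_eq_condExp_cond_of_condExp_indicator (hm : m ≤ mΩ) (hS : MeasurableSet S)
    (hg : Integrable g μ) (hh : StronglyMeasurable[m] h) (hhi : Integrable h μ)
    (hgh : μ[S.indicator g | m] =ᵐ[μ] cprob m μ S * h) : h =ᵐ[μ[|S]] μ[|S][g | m] := by
  refine ae_eq_condExp_of_forall_setIntegral_eq hm (hg.cond S)
    (fun _ _ _ => (hhi.cond S).integrableOn) (fun A hA _ => ?_) hh.aestronglyMeasurable
  rw [setIntegral_cond_eq_setIntegral_cprob_mul hm hS hh hhi hA, setIntegral_cond_eq hS (hm A hA),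
    ← setIntegral_condExp hm (hg.indicator hS) hA]
  exact congrArg _ (setIntegral_congr_ae (hm A hA) (hgh.mono fun _ h _ => h.symm))

lemma condExp_indicator_ae_eq_of_ae_eq_condExp_cond (hm : m ≤ mΩ) (hS : MeasurableSet S)
    (hμS : μ S ≠ 0) (hg : Integrable g μ) (hh : StronglyMeasurable[m] h) (hhi : Integrable h μ)
    (hgh : h =ᵐ[μ[|S]] μ[|S][g | m]) : μ[S.indicator g | m] =ᵐ[μ] cprob m μ S * h := by
  refine (ae_eq_condExp_of_forall_setIntegral_eq hm (hg.indicator hS)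
    (fun _ _ _ => (integrable_cprob_mul hm S hhi).integrableOn) (fun A hA _ => ?_)
    ((stronglyMeasurable_cprob S).mul hh).aestronglyMeasurable).symm
  have hcond : ∫ ω in A, h ω ∂μ[|S] = ∫ ω in A, g ω ∂μ[|S] :=
    (setIntegral_congr_ae (hm A hA) (hgh.mono fun _ h _ => h)).trans
      (setIntegral_condExp hm (hg.cond S) hA)
  rw [setIntegral_cond_eq_setIntegral_cprob_mul hm hS hh hhi hA,
    setIntegral_cond_eq hS (hm A hA)] at hcond
  have hpos : (μ.real S)⁻¹ ≠ 0 :=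
    inv_ne_zero ((measureReal_ne_zero_iff (measure_ne_top μ S)).mpr hμS)
  exact mul_left_cancel₀ hpos hcond

end Bayes

section Indep

variable {Ω β γ : Type*} {m mΩ : MeasurableSpace Ω} [MeasurableSpace β] [MeasurableSpace γ]
  {μ : Measure Ω} {T : Ω → β} {Z : Ω → γ} {t : Set β} {g : Ω → ℝ}

lemma ProbabilityTheory.IndepFun.setIntegral_indicator_preimage (h : IndepFun T Z μ)
    (hT : Measurable T) (hZ : Measurable Z) (ht : MeasurableSet t)
    (hg : Measurable[MeasurableSpace.comap Z inferInstance] g)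
    {A : Set Ω} (hA : MeasurableSet[MeasurableSpace.comap Z inferInstance] A) :
    ∫ ω in A, (T ⁻¹' t).indicator g ω ∂μ = μ.real (T ⁻¹' t) * ∫ ω in A, g ω ∂μ := by
  have hA' : MeasurableSet A := hZ.comap_le A hA
  have hind : IndepFun ((T ⁻¹' t).indicator fun _ => (1 : ℝ)) (A.indicator g) μ :=
    Indep.indicator_indepFun 1 (m := MeasurableSpace.comap T inferInstance) ⟨t, ht, rfl⟩
      (indep_of_indep_of_le_right ((IndepFun_iff_Indep _ _ _).mp h) (hg.indicator hA).comap_le)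
  have hsplit : A.indicator ((T ⁻¹' t).indicator g)
      = (T ⁻¹' t).indicator (fun _ => (1 : ℝ)) * A.indicator g := by
    ext ω; by_cases h1 : ω ∈ A <;> by_cases h2 : ω ∈ T ⁻¹' t <;> simp [h1, h2]
  rw [← integral_indicator hA', ← integral_indicator hA', hsplit,
    hind.integral_mul_eq_mul_integral (measurable_const.indicator (hT ht)).aestronglyMeasurable
      ((hg.mono hZ.comap_le le_rfl).indicator hA').aestronglyMeasurable,
    integral_indicator (hT ht), setIntegral_const, smul_eq_mul, mul_one]

lemma ProbabilityTheory.IndepFun.condExp_indicator_preimage [IsFiniteMeasure μ] (hm : m ≤ mΩ)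
    (h : IndepFun T Z μ)
    (hT : Measurable T) (hZ : Measurable Z) (hmZ : m ≤ MeasurableSpace.comap Z inferInstance)
    (ht : MeasurableSet t) (hg : Measurable[MeasurableSpace.comap Z inferInstance] g)
    (hgi : Integrable g μ) :
    μ[(T ⁻¹' t).indicator g | m] =ᵐ[μ] fun ω => μ.real (T ⁻¹' t) * μ[g | m] ω := by
  refine (ae_eq_condExp_of_forall_setIntegral_eq hm (hgi.indicator (hT ht))
    (fun _ _ _ => (integrable_condExp.const_mul _).integrableOn) (fun A hA _ => ?_)
    (stronglyMeasurable_condExp.const_mul _).aestronglyMeasurable).symm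
  rw [integral_const_mul, setIntegral_condExp hm hgi hA,
    h.setIntegral_indicator_preimage hT hZ ht hg (hmZ A hA)]

end Indep

lemma le_measureReal_of_le_cprob {Ω : Type*} {m mΩ : MeasurableSpace Ω} {μ : Measure Ω}
    [IsProbabilityMeasure μ] (hm : m ≤ mΩ) {s : Set Ω} (hs : MeasurableSet s) {ε : ℝ}
    (h : ∀ᵐ ω ∂μ, ε ≤ cprob m μ s ω) : ε ≤ μ.real s := by
  calc ε = ∫ _, ε ∂μ := by simp
    _ ≤ ∫ ω, cprob m μ s ω ∂μ := integral_mono_ae (integrable_const ε) integrable_condExp h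
    _ = μ.real s := by simpa using setIntegral_cprob (μ := μ) hm hs MeasurableSet.univ

lemma CondIndepFunGiven.condExp_cond_preimage_ae_eq {Ω β γ : Type*} {m mΩ : MeasurableSpace Ω}
    [MeasurableSpace β] [MeasurableSpace γ] {μ : Measure Ω} [IsFiniteMeasure μ] {R : Ω → β}
    {V : Ω → γ} (hm : m ≤ mΩ) (hR : Measurable R) (hV : Measurable V)
    (h : CondIndepFunGiven m R V μ) {s : Set β} (hs : MeasurableSet s) {φ : γ → ℝ}
    (hφ : Measurable φ) (hint : Integrable (φ ∘ V) μ)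
    (hpos : ∀ᵐ ω ∂μ, 0 < cprob m μ (R ⁻¹' s) ω) :
    μ[|R ⁻¹' s][φ ∘ V | m] =ᵐ[μ] μ[φ ∘ V | m] :=
  ae_eq_of_ae_eq_cond hm (hR hs) hpos stronglyMeasurable_condExp stronglyMeasurable_condExp
    (ae_eq_condExp_cond_of_condExp_indicator hm (hR hs) hint stronglyMeasurable_condExp
      integrable_condExp (h.condExp_indicator_comp hm hR hV hs hφ hint)).symm

lemma ProbabilityTheory.IndepFun.condExp_cond_preimage_ae_eq {Ω β γ : Type*}
    {m mΩ : MeasurableSpace Ω} [MeasurableSpace β] [MeasurableSpace γ] {μ : Measure Ω}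
    [IsFiniteMeasure μ] {T : Ω → β} {Z : Ω → γ} {t : Set β} {g : Ω → ℝ} (hm : m ≤ mΩ)
    (h : IndepFun T Z μ) (hT : Measurable T) (hZ : Measurable Z)
    (hmZ : m ≤ MeasurableSpace.comap Z inferInstance) (ht : MeasurableSet t)
    (hg : Measurable[MeasurableSpace.comap Z inferInstance] g) (hgi : Integrable g μ) :
    μ[|T ⁻¹' t][g | m] =ᵐ[μ[|T ⁻¹' t]] μ[g | m] := by
  have hcprob : cprob m μ (T ⁻¹' t) =ᵐ[μ] fun _ => μ.real (T ⁻¹' t) := by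
    simpa [cprob, cexp, condExp_const hm] using
      h.condExp_indicator_preimage hm hT hZ hmZ ht measurable_const (integrable_const (1 : ℝ))
  refine (ae_eq_condExp_cond_of_condExp_indicator hm (hT ht) hgi stronglyMeasurable_condExp
    integrable_condExp ?_).symm
  filter_upwards [h.condExp_indicator_preimage hm hT hZ hmZ ht hg hgi, hcprob] with ω h1 h2
  rw [h1, Pi.mul_apply, h2]

lemma condExp_cond_ae_eq_condExp_cond_inter {Ω β γ : Type*} {m mΩ : MeasurableSpace Ω}
    [MeasurableSpace β] [MeasurableSpace γ] {P : Measure Ω} [IsFiniteMeasure P] {T : Ω → β}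
    {Z : Ω → γ} {S : Set Ω} {t : Set β} {W Y : Ω → ℝ} (hm : m ≤ mΩ) (hS : MeasurableSet S)
    (hT : Measurable T) (hZ : Measurable Z) (hmZ : m ≤ MeasurableSpace.comap Z inferInstance)
    (ht : MeasurableSet t) (hWZ : Measurable[MeasurableSpace.comap Z inferInstance] W)
    (hint : Integrable W P) (hYW : ∀ ω ∈ T ⁻¹' t, Y ω = W ω)
    (hpos : ∀ᵐ ω ∂P, 0 < cprob m P S ω) (hposT : ∀ᵐ ω ∂P[|S], 0 < cprob m P[|S] (T ⁻¹' t) ω)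
    (h : IndepFun T Z P[|S]) :
    P[|S][W | m] =ᵐ[P] P[|T ⁻¹' t ∩ S][Y | m] := by
  rw [inter_comm, ← cond_cond_eq_cond_inter hS (hT ht)]
  have hYW' : Y =ᵐ[P[|S][|T ⁻¹' t]] W := (ae_cond_mem (hT ht)).mono hYW
  refine ae_eq_of_ae_eq_cond hm hS hpos stronglyMeasurable_condExp stronglyMeasurable_condExp
    (ae_eq_of_ae_eq_cond hm (hT ht) hposT stronglyMeasurable_condExp stronglyMeasurable_condExp ?_)
  exact ((condExp_congr_ae hYW').trans
    (h.condExp_cond_preimage_ae_eq hm hT hZ hmZ ht hWZ (hint.cond S))).symm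

lemma condExp_indicator_indicator_ae_eq {Ω β γ : Type*} {m mΩ : MeasurableSpace Ω}
    [MeasurableSpace β] [MeasurableSpace γ] {P : Measure Ω} [IsFiniteMeasure P] {T : Ω → β}
    {Z : Ω → γ} {S : Set Ω} {t : Set β} {W : Ω → ℝ} (hm : m ≤ mΩ) (hS : MeasurableSet S)
    (hPS : P S ≠ 0) (hT : Measurable T) (hZ : Measurable Z)
    (hmZ : m ≤ MeasurableSpace.comap Z inferInstance) (ht : MeasurableSet t)
    (hWZ : Measurable[MeasurableSpace.comap Z inferInstance] W) (hint : Integrable W P)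
    (h : IndepFun T Z P[|S]) (hfh : P[|S][W | m] =ᵐ[P] P[W | m]) :
    P[S.indicator ((T ⁻¹' t).indicator W) | m]
      =ᵐ[P] cprob m P S * fun ω => (P[|S] (T ⁻¹' t)).toReal * P[W | m] ω := by
  refine condExp_indicator_ae_eq_of_ae_eq_condExp_cond hm hS hPS (hint.indicator (hT ht))
    (stronglyMeasurable_condExp.const_mul _) (integrable_condExp.const_mul _) ?_
  filter_upwards [h.condExp_indicator_preimage hm hT hZ hmZ ht hWZ (hint.cond S),
    cond_absolutelyContinuous.ae_le hfh] with ω h1 h2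
  rw [h1, h2]
  rfl

lemma integral_eq_integral_inverse_probability_weighted {Ω γ : Type*} {m mΩ : MeasurableSpace Ω}
    [MeasurableSpace γ] {P : Measure Ω} [IsProbabilityMeasure P] {R T W Y : Ω → ℝ} {Z : Ω → γ}
    {t ε : ℝ} (hm : m ≤ mΩ) (hR : Measurable R) (hT : Measurable T) (hZ : Measurable Z)
    (hmZ : m ≤ MeasurableSpace.comap Z inferInstance)
    (hWZ : Measurable[MeasurableSpace.comap Z inferInstance] W) (hint : Integrable W P)
    (hRbin : ∀ ω, R ω = 0 ∨ R ω = 1) (hYW : ∀ ω, T ω = t → Y ω = W ω) (hε : 0 < ε)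
    (hS : P (R ⁻¹' {1}) ≠ 0) (hL : ∀ᵐ ω ∂P, ε ≤ cprob m P (R ⁻¹' {1}) ω)
    (hπ : ε ≤ (P[|R ⁻¹' {1}] (T ⁻¹' {t})).toReal) (h : IndepFun T Z P[|R ⁻¹' {1}])
    (hfh : P[|R ⁻¹' {1}][W | m] =ᵐ[P] P[W | m]) :
    ∫ ω, W ω ∂P = ∫ ω, R ω * (if T ω = t then (1 : ℝ) else 0) * Y ω /
      (cprob m P (R ⁻¹' {1}) ω * (P[|R ⁻¹' {1}] (T ⁻¹' {t})).toReal) ∂P := by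
  set S := R ⁻¹' {1}
  set L := cprob m P S
  set π := (P[|S] (T ⁻¹' {t})).toReal
  set g := S.indicator ((T ⁻¹' {t}).indicator W)
  have hSm : MeasurableSet S := hR (measurableSet_singleton 1)
  have hπ0 : 0 < π := hε.trans_le hπ
  have hg : Integrable g P := (hint.indicator (hT (measurableSet_singleton t))).indicator hSm
  set K := fun ω => (L ω * π)⁻¹
  have hK : StronglyMeasurable[m] K :=
    ((stronglyMeasurable_cprob S).measurable.mul_const π).inv.stronglyMeasurable
  have hKbd : ∀ᵐ ω ∂P, ‖K ω‖ ≤ (ε * π)⁻¹ := by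
    filter_upwards [hL] with ω hω
    have hLω : 0 < L ω := hε.trans_le hω
    rw [Real.norm_eq_abs, abs_of_pos (by positivity)]
    exact inv_anti₀ (by positivity) (mul_le_mul_of_nonneg_right hω hπ0.le)
  have hweighted : (fun ω => R ω * (if T ω = t then (1 : ℝ) else 0) * Y ω / (L ω * π)) =
      fun ω => K ω * g ω := by
    funext ω
    rcases hRbin ω with hR0 | hR1
    · simp [g, S, hR0]
    · by_cases hTt : T ω = t
      · simp [g, S, K, hR1, hTt, hYW ω hTt, div_eq_inv_mul]
      · simp [g, hTt]
  calc ∫ ω, W ω ∂P = ∫ ω, P[W | m] ω ∂P := (integral_condExp hm).symm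
    _ = ∫ ω, K ω * (L * fun ω => π * P[W | m] ω) ω ∂P := by
        refine integral_congr_ae (hL.mono fun ω hω => ?_)
        have hLω : L ω ≠ 0 := (hε.trans_le hω).ne'
        simp only [K, Pi.mul_apply]
        field_simp
    _ = ∫ ω, K ω * P[g | m] ω ∂P :=
        integral_congr_ae ((condExp_indicator_indicator_ae_eq hm hSm hS hT hZ hmZ
          (measurableSet_singleton t) hWZ hint h hfh).mono fun ω h => congrArg (K ω * ·) h.symm)
    _ = ∫ ω, K ω * g ω ∂P := by
        simpa using setIntegral_mul_condExp hm hK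
          (hg.bdd_mul (hK.mono hm).aestronglyMeasurable hKbd) hg MeasurableSet.univ
    _ = _ := by rw [hweighted]

theorem identification_from_trial {Ω β γ : Type*} {m mΩ : MeasurableSpace Ω} [MeasurableSpace β]
    [MeasurableSpace γ] {P : Measure Ω} [IsProbabilityMeasure P] {R T Y : Ω → ℝ} {V : Ω → β}
    {Z : Ω → γ} {φ : β → ℝ} {t ε : ℝ} (hm : m ≤ mΩ) (hR : Measurable R) (hT : Measurable T)
    (hV : Measurable V) (hZ : Measurable Z) (hφ : Measurable φ)
    (hmZ : m ≤ MeasurableSpace.comap Z inferInstance)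
    (hWZ : Measurable[MeasurableSpace.comap Z inferInstance] (φ ∘ V))
    (hint : Integrable (φ ∘ V) P) (hRbin : ∀ ω, R ω = 0 ∨ R ω = 1)
    (hYW : ∀ ω, T ω = t → Y ω = φ (V ω)) (hε : 0 < ε) (hS : P (R ⁻¹' {1}) ≠ 0)
    (hL : ∀ᵐ ω ∂P, ε ≤ cprob m P (R ⁻¹' {1}) ω)
    (hπ : ∀ᵐ ω ∂P, ε ≤ cprob m P[|R ⁻¹' {1}] (T ⁻¹' {t}) ω)
    (hA1 : IndepFun T Z P[|R ⁻¹' {1}]) (hA3 : CondIndepFunGiven m R V P) :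
    (∫ ω, (φ ∘ V) ω ∂P = ∫ ω, R ω * (if T ω = t then (1 : ℝ) else 0) * Y ω /
        (cprob m P (R ⁻¹' {1}) ω * (P[|R ⁻¹' {1}] (T ⁻¹' {t})).toReal) ∂P) ∧
      (∫ ω, (φ ∘ V) ω ∂P = ∫ ω, cexp m P[|R ⁻¹' {1}] (φ ∘ V) ω ∂P) ∧
      (cexp m P[|R ⁻¹' {1}] (φ ∘ V) =ᵐ[P] cexp m P[|T ⁻¹' {t} ∩ R ⁻¹' {1}] Y) := by
  have hpos : ∀ᵐ ω ∂P, 0 < cprob m P (R ⁻¹' {1}) ω := hL.mono fun _ h => hε.trans_le h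
  have hπ1 : ∀ᵐ ω ∂P[|R ⁻¹' {1}], ε ≤ cprob m P[|R ⁻¹' {1}] (T ⁻¹' {t}) ω :=
    cond_absolutelyContinuous.ae_le hπ
  have : IsProbabilityMeasure P[|R ⁻¹' {1}] := cond_isProbabilityMeasure hS
  have hfh := hA3.condExp_cond_preimage_ae_eq hm hR hV (measurableSet_singleton 1) hφ hint hpos
  exact ⟨integral_eq_integral_inverse_probability_weighted hm hR hT hZ hmZ hWZ hint hRbin hYW hε
      hS hL (le_measureReal_of_le_cprob hm (hT (measurableSet_singleton t)) hπ1) hA1 hfh,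
    (integral_condExp hm).symm.trans (integral_congr_ae hfh.symm),
    condExp_cond_ae_eq_condExp_cond_inter hm (hR (measurableSet_singleton 1)) hT hZ hmZ
      (measurableSet_singleton t) hWZ hint hYW hpos (hπ1.mono fun _ h => hε.trans_le h) hA1⟩

theorem stmt5_general
    {Ω 𝒳 : Type*} [MeasurableSpace Ω] [MeasurableSpace 𝒳]
    (P : Measure Ω) [IsProbabilityMeasure P]
    (X : Ω → 𝒳) (R T Y₁ Y₀ Y : Ω → ℝ) (Yt : ℝ → Ω → ℝ)
    (hX : Measurable X) (hR : Measurable R) (hT : Measurable T)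
    (hY₁m : Measurable Y₁) (hY₀m : Measurable Y₀)
    (hRbin : ∀ ω, R ω = 0 ∨ R ω = 1)
    (hY₁2 : MemLp Y₁ 2 P) (hY₀2 : MemLp Y₀ 2 P)
    (hY : Y = fun ω => T ω * Y₁ ω + (1 - T ω) * Y₀ ω)
    (hYt1 : Yt 1 = Y₁) (hYt0 : Yt 0 = Y₀)
    (ε : ℝ) (hε : 0 < ε)
    (hlam_pos : 0 < P {ω | R ω = 1})
    (hlamX : ∀ᵐ ω ∂P, ε ≤ cprob (sigmaX X) P {ω' | R ω' = 1} ω ∧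
      cprob (sigmaX X) P {ω' | R ω' = 1} ω ≤ 1 - ε)
    (hpi : ∀ r ∈ ({0, 1} : Set ℝ), ∀ t ∈ ({0, 1} : Set ℝ), ∀ᵐ ω ∂P,
      ε ≤ cprob (sigmaX X) (ProbabilityTheory.cond P {ω' | R ω' = r}) {ω' | T ω' = t} ω ∧
      cprob (sigmaX X) (ProbabilityTheory.cond P {ω' | R ω' = r}) {ω' | T ω' = t} ω ≤ 1 - ε)
    (hA1 : IndepFun T (fun ω => (Y₁ ω, Y₀ ω, X ω)) (ProbabilityTheory.cond P {ω | R ω = 1}))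
    (hA3 : CondIndepFunGiven (sigmaX X) R (fun ω => (Y₁ ω, Y₀ ω)) P)
    :
    ∀ t ∈ ({0, 1} : Set ℝ),
      ((∫ ω', Yt t ω' ∂P) = ∫ ω, R ω * (if T ω = t then (1 : ℝ) else 0) * Y ω / (cprob (sigmaX X) P {ω' | R ω' = 1} ω * ((ProbabilityTheory.cond P {ω' | R ω' = 1}) {ω' | T ω' = t}).toReal) ∂P) ∧
      ((∫ ω', Yt t ω' ∂P) = ∫ ω, cexp (sigmaX X) (ProbabilityTheory.cond P {ω' | R ω' = 1}) (Yt t) ω ∂P) ∧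
      (cexp (sigmaX X) (ProbabilityTheory.cond P {ω' | R ω' = 1}) (Yt t)
        =ᵐ[P] cexp (sigmaX X)
          (ProbabilityTheory.cond P ({ω' | T ω' = t} ∩ {ω' | R ω' = 1})) Y) := by
  intro t ht
  set V := fun ω => (Y₁ ω, Y₀ ω)
  set Z := fun ω => (Y₁ ω, Y₀ ω, X ω)
  have hZ : Measurable[MeasurableSpace.comap Z inferInstance] Z := Measurable.of_comap_le le_rfl
  obtain ⟨φ, hφ, hWφ, hYW, hint⟩ : ∃ φ : ℝ × ℝ → ℝ, Measurable φ ∧ Yt t = φ ∘ V ∧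
      (∀ ω, T ω = t → Y ω = φ (V ω)) ∧ Integrable (φ ∘ V) P := by
    rcases ht with rfl | rfl
    · exact ⟨Prod.snd, measurable_snd, hYt0, fun ω h => by simp [hY, h, V],
        hY₀2.integrable one_le_two⟩
    · exact ⟨Prod.fst, measurable_fst, hYt1, fun ω h => by simp [hY, h, V],
        hY₁2.integrable one_le_two⟩
  rw [hWφ]
  exact identification_from_trial hX.comap_le hR hT (hY₁m.prodMk hY₀m)
    (hY₁m.prodMk (hY₀m.prodMk hX)) hφ ((measurable_snd.comp measurable_snd).comp hZ).comap_le
    ((hφ.comp (measurable_fst.prodMk (measurable_fst.comp measurable_snd))).comp hZ) hint hRbin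
    hYW hε hlam_pos.ne' (hlamX.mono fun _ h => h.1) ((hpi 1 (by simp) t ht).mono fun _ h => h.1)
    hA1 hA3

theorem stmt5
    {Ω 𝒳 : Type*} [MeasurableSpace Ω] [MeasurableSpace 𝒳] [StandardBorelSpace 𝒳]
    (P : Measure Ω) [IsProbabilityMeasure P]
    (X : Ω → 𝒳) (R T Y₁ Y₀ Y : Ω → ℝ) (Yt : ℝ → Ω → ℝ)
    (hX : Measurable X) (hR : Measurable R) (hT : Measurable T)
    (hY₁m : Measurable Y₁) (hY₀m : Measurable Y₀)
    (hRbin : ∀ ω, R ω = 0 ∨ R ω = 1) (hTbin : ∀ ω, T ω = 0 ∨ T ω = 1)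
    (hY₁2 : MemLp Y₁ 2 P) (hY₀2 : MemLp Y₀ 2 P)
    (hY : Y = fun ω => T ω * Y₁ ω + (1 - T ω) * Y₀ ω)
    (hYt1 : Yt 1 = Y₁) (hYt0 : Yt 0 = Y₀)
    (ε : ℝ) (hε : 0 < ε)
    (hlam_pos : 0 < P {ω | R ω = 1}) (hlam_lt : P {ω | R ω = 1} < 1)
    (hlamX : ∀ᵐ ω ∂P, ε ≤ cprob (sigmaX X) P {ω' | R ω' = 1} ω ∧
      cprob (sigmaX X) P {ω' | R ω' = 1} ω ≤ 1 - ε)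
    (hpi : ∀ r ∈ ({0, 1} : Set ℝ), ∀ t ∈ ({0, 1} : Set ℝ), ∀ᵐ ω ∂P,
      ε ≤ cprob (sigmaX X) (ProbabilityTheory.cond P {ω' | R ω' = r}) {ω' | T ω' = t} ω ∧
      cprob (sigmaX X) (ProbabilityTheory.cond P {ω' | R ω' = r}) {ω' | T ω' = t} ω ≤ 1 - ε)
    (hA1 : IndepFun T (fun ω => (Y₁ ω, Y₀ ω, X ω)) (ProbabilityTheory.cond P {ω | R ω = 1}))
    (hA3 : CondIndepFunGiven (sigmaX X) R (fun ω => (Y₁ ω, Y₀ ω)) P)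
    :
    ∀ t ∈ ({0, 1} : Set ℝ),
      ((∫ ω', Yt t ω' ∂P) = ∫ ω, R ω * (if T ω = t then (1 : ℝ) else 0) * Y ω / (cprob (sigmaX X) P {ω' | R ω' = 1} ω * ((ProbabilityTheory.cond P {ω' | R ω' = 1}) {ω' | T ω' = t}).toReal) ∂P) ∧
      ((∫ ω', Yt t ω' ∂P) = ∫ ω, cexp (sigmaX X) (ProbabilityTheory.cond P {ω' | R ω' = 1}) (Yt t) ω ∂P) ∧
      (cexp (sigmaX X) (ProbabilityTheory.cond P {ω' | R ω' = 1}) (Yt t)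
        =ᵐ[P] cexp (sigmaX X)
          (ProbabilityTheory.cond P ({ω' | T ω' = t} ∩ {ω' | R ω' = 1})) Y) :=
  stmt5_general P X R T Y₁ Y₀ Y Yt hX hR hT hY₁m hY₀m hRbin hY₁2 hY₀2 hY hYt1 hYt0 ε hε hlam_pos
    hlamX hpi hA1 hA3
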